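/- arXiv:2106.11639 — 3 statements merged into one kernel-verified Lean document; each statement's English description precedes it below -/
import Mathlib

section
/- Let g : (0,∞) → (0,∞) satisfy g(λt) ≤ λ^{s_g} g(t) for all λ ≥ 1 and t > 0, with s_g ≥ 1, and let σ > s_g + 1. Fix 0 < ε < σ − s_g − 1. Then for every λ > 0, (1/g^{-1}(λ)) ∫₀^{g^{-1}(λ)} g(t)^{-1/(σ−1)} dt ≤ (σ−1)/(σ − s_g − 1 − ε) · λ^{−1/(σ−1)}, where g^{-1} denotes the inverse of the strictly increasing function g. -/
/-!
Writing `T = g⁻¹(λ)`, the upper index applied with the dilation `T / t ≥ 1` gives the lower bound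
`g t ≥ λ (t / T)^{s_g}` on `(0, T]`. Hence `g(t)^{-1/(σ-1)} ≤ λ^{-1/(σ-1)} (t / T)^{-s_g/(σ-1)}`, and the
average of `(t / T)^r` over `(0, T]` is `1 / (r + 1)`, finite because `s_g < σ - 1`.
-/

open MeasureTheory Set

lemma mul_div_rpow_le_of_upper_index {g : ℝ → ℝ} {s : ℝ}
    (hupper : ∀ l ≥ (1 : ℝ), ∀ t > (0 : ℝ), g (l * t) ≤ l ^ s * g t)
    {t T : ℝ} (ht : 0 < t) (htT : t ≤ T) : g T * (t / T) ^ s ≤ g t := by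
  have hT : 0 < T := ht.trans_le htT
  have hdil : g T ≤ (T / t) ^ s * g t := by
    simpa [div_mul_cancel₀ T ht.ne'] using hupper (T / t) ((one_le_div ht).mpr htT) t ht
  have hpos : 0 < (T / t) ^ s := Real.rpow_pos_of_pos (by positivity) s
  rw [← inv_div, Real.inv_rpow (by positivity), mul_inv_le_iff₀ hpos, mul_comm (g t)]
  exact hdil

section PowerAverage

variable {r T : ℝ}

lemma eqOn_Ioc_div_rpow (hT : 0 < T) :
    EqOn (fun t => (t / T) ^ r) (fun t => t ^ r / T ^ r) (Ioc 0 T) :=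
  fun _ ht => Real.div_rpow ht.1.le hT.le r

lemma integrableOn_Ioc_div_rpow (hr : -1 < r) (hT : 0 < T) :
    IntegrableOn (fun t => (t / T) ^ r) (Ioc 0 T) := by
  have h : IntegrableOn (fun t => t ^ r / T ^ r) (Ioc 0 T) :=
    ((intervalIntegrable_iff_integrableOn_Ioc_of_le hT.le).mp
    (intervalIntegral.intervalIntegrable_rpow' hr)).div_const (T ^ r)
  exact h.congr_fun (eqOn_Ioc_div_rpow hT).symm measurableSet_Ioc

lemma integral_Ioc_div_rpow (hr : -1 < r) (hT : 0 < T) :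
    ∫ t in Ioc 0 T, (t / T) ^ r = T / (r + 1) := by
  rw [setIntegral_congr_fun measurableSet_Ioc (eqOn_Ioc_div_rpow hT), integral_div,
    ← intervalIntegral.integral_of_le hT.le, integral_rpow (Or.inl hr),
    Real.zero_rpow (by linarith), Real.rpow_add_one hT.ne']
  have : T ^ r ≠ 0 := (Real.rpow_pos_of_pos hT r).ne'
  field_simp
  ring

end PowerAverage

theorem average_rpow_neg_le_of_upper_index {g : ℝ → ℝ} {s c T : ℝ}
    (hupper : ∀ l ≥ (1 : ℝ), ∀ t > (0 : ℝ), g (l * t) ≤ l ^ s * g t)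
    (hgpos : ∀ t > (0 : ℝ), 0 < g t) (hc : 0 ≤ c) (hsc : s * c < 1) (hT : 0 < T) :
    (1 / T) * ∫ t in Ioc 0 T, g t ^ (-c) ≤ g T ^ (-c) / (1 - s * c) := by
  have hbound : ∀ t ∈ Ioc 0 T, g t ^ (-c) ≤ g T ^ (-c) * (t / T) ^ (-(s * c)) := by
    rintro t ⟨ht, htT⟩
    have hlow := mul_div_rpow_le_of_upper_index hupper ht htT
    calc g t ^ (-c) ≤ (g T * (t / T) ^ s) ^ (-c) :=
          Real.rpow_le_rpow_of_nonpos (by have := hgpos T hT; positivity) hlow (by linarith)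
      _ = g T ^ (-c) * (t / T) ^ (-(s * c)) := by
          rw [Real.mul_rpow (hgpos T hT).le (by positivity), ← Real.rpow_mul (by positivity),
            mul_neg]
  have hr : -1 < -(s * c) := by linarith
  have hint : ∫ t in Ioc 0 T, g t ^ (-c) ≤ g T ^ (-c) * (T / (1 - s * c)) := by
    rw [← neg_add_eq_sub, ← integral_Ioc_div_rpow hr hT, ← integral_const_mul]
    refine integral_mono_of_nonneg ?_ ((integrableOn_Ioc_div_rpow hr hT).const_mul _) ?_
    · filter_upwards [ae_restrict_mem measurableSet_Ioc] with t ht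
      exact Real.rpow_nonneg (hgpos t ht.1).le _
    · filter_upwards [ae_restrict_mem measurableSet_Ioc] with t ht
      exact hbound t ht
  calc (1 / T) * ∫ t in Ioc 0 T, g t ^ (-c) ≤ (1 / T) * (g T ^ (-c) * (T / (1 - s * c))) :=
        mul_le_mul_of_nonneg_left hint (by positivity)
    _ = g T ^ (-c) / (1 - s * c) := by field_simp

theorem I1_estimate_general (g ginv : ℝ → ℝ) (sg σ ε : ℝ)
    (hsg : 1 ≤ sg) (hε : 0 < ε) (hε' : ε < σ - sg - 1)
    (hgpos : ∀ t > (0 : ℝ), 0 < g t)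
    (hinvpos : ∀ s > (0 : ℝ), 0 < ginv s)
    (hinv : ∀ s > (0 : ℝ), g (ginv s) = s)
    (hupper : ∀ l ≥ (1 : ℝ), ∀ t > (0 : ℝ), g (l * t) ≤ l ^ sg * g t) :
    ∀ l > (0 : ℝ),
      (1 / ginv l) * ∫ t in Set.Ioc (0 : ℝ) (ginv l), (g t) ^ (-(1 / (σ - 1))) ≤
        ((σ - 1) / (σ - sg - 1 - ε)) * l ^ (-(1 / (σ - 1))) := by
  intro l hl
  have hσ1 : 0 < σ - 1 := by linarith
  have hsc : 1 - sg * (1 / (σ - 1)) = (σ - 1 - sg) / (σ - 1) := by field_simp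
  have hav := average_rpow_neg_le_of_upper_index (c := 1 / (σ - 1)) hupper hgpos (by positivity)
    (by rw [← sub_pos, hsc]; exact div_pos (by linarith) hσ1) (hinvpos l hl)
  rw [hinv l hl, hsc, div_div_eq_mul_div, mul_div_assoc, mul_comm (l ^ _)] at hav
  refine hav.trans (mul_le_mul_of_nonneg_right ?_ (Real.rpow_nonneg hl.le _))
  exact div_le_div_of_nonneg_left hσ1.le (by linarith) (by linarith)

/-- Estimate `I₁` (eq. (may103)): if `g(λt) ≤ λ^{s_g} g(t)` for `λ ≥ 1`, `t > 0`, with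
`s_g ≥ 1`, `σ > s_g + 1` and `0 < ε < σ - s_g - 1`, then for every `λ > 0`,
`(1/g⁻¹(λ)) ∫₀^{g⁻¹(λ)} g(t)^{-1/(σ-1)} dt ≤ (σ-1)/(σ-s_g-1-ε) · λ^{-1/(σ-1)}`. -/
theorem I1_estimate (g ginv : ℝ → ℝ) (sg σ ε : ℝ)
    (hsg : 1 ≤ sg) (hσ : sg + 1 < σ) (hε : 0 < ε) (hε' : ε < σ - sg - 1)
    (hgpos : ∀ t > (0 : ℝ), 0 < g t)
    (hmono : StrictMonoOn g (Set.Ioi (0 : ℝ)))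
    (hinvpos : ∀ s > (0 : ℝ), 0 < ginv s)
    (hinv : ∀ s > (0 : ℝ), g (ginv s) = s)
    (hinv' : ∀ t > (0 : ℝ), ginv (g t) = t)
    (hupper : ∀ l ≥ (1 : ℝ), ∀ t > (0 : ℝ), g (l * t) ≤ l ^ sg * g t) :
    ∀ l > (0 : ℝ),
      (1 / ginv l) * ∫ t in Set.Ioc (0 : ℝ) (ginv l), (g t) ^ (-(1 / (σ - 1))) ≤
        ((σ - 1) / (σ - sg - 1 - ε)) * l ^ (-(1 / (σ - 1))) :=
  I1_estimate_general g ginv sg σ ε hsg hε hε' hgpos hinvpos hinv hupper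
end

section
/- Let g : (0,∞) → (0,∞) be continuous, strictly increasing and surjective, with lower index i_g > 0 in the sense that g(λt) ≥ λ^{i_g} g(t) for all λ ≥ 1 and t > 0. Fix 0 < ε < i_g and σ > 1. Then for every λ > 0, ∫_{g^{-1}(λ)}^{∞} g(t)^{-1/(σ−1)} dt/t ≤ ((σ−1)/ε) · λ^{−1/(σ−1)}. -/
/-!
With `a = g⁻¹(λ)` and `p = 1/(σ-1)`, the lower index gives `g t ≥ (t/a)^ε λ` for `t ≥ a`
(using `ε < i_g` and `t/a ≥ 1`). Hence the integrand is dominated by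
`λ^{-p} a^{εp} t^{-εp-1}`, whose integral over `(a, ∞)` is exactly `λ^{-p}/(εp) = ((σ-1)/ε) λ^{-p}`.
-/

open MeasureTheory Set

theorem integral_Ioi_rpow_neg_sub_one {a s : ℝ} (ha : 0 < a) (hs : 0 < s) :
    ∫ t in Ioi a, t ^ (-s - 1) = a ^ (-s) / s := by
  rw [integral_Ioi_rpow_of_lt (by linarith) ha, sub_add_cancel, neg_div_neg_eq]

section LowerIndex

variable {g : ℝ → ℝ} {ig ε a t : ℝ}

theorem rpow_div_mul_le_of_lower_index
    (hlow : ∀ l ≥ (1 : ℝ), ∀ t > (0 : ℝ), l ^ ig * g t ≤ g (l * t))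
    (hε : ε ≤ ig) (ha : 0 < a) (hga : 0 ≤ g a) (hat : a ≤ t) :
    (t / a) ^ ε * g a ≤ g t := by
  have hta : 1 ≤ t / a := (one_le_div ha).mpr hat
  calc (t / a) ^ ε * g a ≤ (t / a) ^ ig * g a := by gcongr
    _ ≤ g (t / a * a) := hlow _ hta a ha
    _ = g t := by rw [div_mul_cancel₀ _ ha.ne']

theorem rpow_neg_div_le_of_lower_index {p : ℝ}
    (hlow : ∀ l ≥ (1 : ℝ), ∀ t > (0 : ℝ), l ^ ig * g t ≤ g (l * t))
    (hε : ε ≤ ig) (ha : 0 < a) (hga : 0 < g a) (hp : 0 ≤ p) (hat : a ≤ t) :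
    g t ^ (-p) / t ≤ g a ^ (-p) * a ^ (ε * p) * t ^ (-(ε * p) - 1) := by
  have ht : 0 < t := ha.trans_le hat
  have hlower := rpow_div_mul_le_of_lower_index hlow hε ha hga.le hat
  have hpos : 0 < (t / a) ^ ε * g a := by positivity
  calc g t ^ (-p) / t ≤ ((t / a) ^ ε * g a) ^ (-p) / t :=
        div_le_div_of_nonneg_right
          (Real.rpow_le_rpow_of_nonpos hpos hlower (neg_nonpos.mpr hp)) ht.le
    _ = g a ^ (-p) * a ^ (ε * p) * t ^ (-(ε * p) - 1) := by
        rw [Real.mul_rpow (by positivity) hga.le, ← Real.rpow_mul (by positivity),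
          Real.div_rpow ht.le ha.le, Real.rpow_sub_one ht.ne', mul_neg,
          Real.rpow_neg ha.le (ε * p)]
        field_simp

end LowerIndex

theorem I2_estimate_general (g ginv : ℝ → ℝ) (ig σ ε : ℝ)
    (hσ : 1 < σ) (hε : 0 < ε) (hε' : ε < ig)
    (hinvpos : ∀ s > (0 : ℝ), 0 < ginv s)
    (hinv : ∀ s > (0 : ℝ), g (ginv s) = s)
    (hlow : ∀ l ≥ (1 : ℝ), ∀ t > (0 : ℝ), l ^ ig * g t ≤ g (l * t)) :
    ∀ l > (0 : ℝ),
      ∫ t in Set.Ioi (ginv l), (g t) ^ (-(1 / (σ - 1))) / t ≤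
        ((σ - 1) / ε) * l ^ (-(1 / (σ - 1))) := by
  intro l hl
  set a := ginv l
  set p := 1 / (σ - 1)
  have ha : 0 < a := hinvpos l hl
  have hga : g a = l := hinv l hl
  have hgapos : 0 < g a := hga ▸ hl
  have hσ₁ : 0 < σ - 1 := sub_pos.mpr hσ
  have hp : 0 < p := one_div_pos.mpr hσ₁
  have hεp : 0 < ε * p := mul_pos hε hp
  have hnonneg : ∀ t ∈ Ioi a, 0 ≤ g t ^ (-p) / t := fun t ht => by
    have : 0 < t := ha.trans ht
    have hgt := rpow_div_mul_le_of_lower_index hlow hε'.le ha hgapos.le ht.out.le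
    have : 0 < g t := lt_of_lt_of_le (by positivity) hgt
    positivity
  have hdom : ∀ t ∈ Ioi a, g t ^ (-p) / t ≤ l ^ (-p) * a ^ (ε * p) * t ^ (-(ε * p) - 1) :=
    fun t ht => hga ▸ rpow_neg_div_le_of_lower_index hlow hε'.le ha hgapos hp.le ht.out.le
  calc ∫ t in Ioi a, g t ^ (-p) / t
      ≤ ∫ t in Ioi a, l ^ (-p) * a ^ (ε * p) * t ^ (-(ε * p) - 1) :=
        setIntegral_mono_of_nonneg hnonneg hdom
          ((integrableOn_Ioi_rpow_of_lt (by linarith) ha).const_mul _)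
    _ = l ^ (-p) * a ^ (ε * p) * (a ^ (-(ε * p)) / (ε * p)) := by
        rw [integral_const_mul, integral_Ioi_rpow_neg_sub_one ha hεp]
    _ = (σ - 1) / ε * l ^ (-p) := by
        rw [Real.rpow_neg ha.le]
        have : a ^ (ε * p) ≠ 0 := by positivity
        field_simp
        simp [p, hσ₁.ne']

/-- Estimate `I₂` (eq. (may104)): if `g(λt) ≥ λ^{i_g} g(t)` for `λ ≥ 1`, `t > 0`, with
`i_g > 0`, `0 < ε < i_g` and `σ > 1`, then for every `λ > 0`,
`∫_{g⁻¹(λ)}^∞ g(t)^{-1/(σ-1)} dt/t ≤ ((σ-1)/ε) λ^{-1/(σ-1)}`. -/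
theorem I2_estimate (g ginv : ℝ → ℝ) (ig σ ε : ℝ)
    (hig : 0 < ig) (hσ : 1 < σ) (hε : 0 < ε) (hε' : ε < ig)
    (hgpos : ∀ t > (0 : ℝ), 0 < g t)
    (hmono : StrictMonoOn g (Set.Ioi (0 : ℝ)))
    (hinvpos : ∀ s > (0 : ℝ), 0 < ginv s)
    (hinv : ∀ s > (0 : ℝ), g (ginv s) = s)
    (hinv' : ∀ t > (0 : ℝ), ginv (g t) = t)
    (hlow : ∀ l ≥ (1 : ℝ), ∀ t > (0 : ℝ), l ^ ig * g t ≤ g (l * t)) :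
    ∀ l > (0 : ℝ),
      ∫ t in Set.Ioi (ginv l), (g t) ^ (-(1 / (σ - 1))) / t ≤
        ((σ - 1) / ε) * l ^ (-(1 / (σ - 1))) :=
  I2_estimate_general g ginv ig σ ε hσ hε hε' hinvpos hinv hlow
end

section
/- Let G : [0,∞) → [0,∞) be convex, strictly increasing, G(0) = 0, with G(t)/t^{i} nondecreasing for some i > 1 and suppose ∫₁^∞ (t/G(t))^{1/(σ−1)} dt = ∞ for some σ > 1. Define H_σ(s) = (∫₀^s (t/G(t))^{1/(σ−1)} dt)^{(σ−1)/σ} (assuming the integral near 0 converges) and G_σ = G ∘ H_σ^{-1}. Then lim_{t→∞} G_σ(t)/t^{σ'} = ∞, where σ' = σ/(σ−1). -/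
/-!
For `u ≥ 1` the monotonicity of `G(t)/t^i` gives `G u ≥ G 1 · u^i ≥ G 1 · u`, so the integrand
`(t/G t)^{1/(σ-1)}` of `H_σ` is bounded on `[1, ∞)` and `F(s) := H_σ(s)^{σ'}` grows at most
linearly. Since `t^{σ'} = F(H_σ⁻¹ t)`, this forces `H_σ⁻¹ t → ∞`, and then
`G_σ(t)/t^{σ'} = G(s)/F(s) ≳ s^i / s = s^{i-1} → ∞` with `s = H_σ⁻¹ t`.
-/

open MeasureTheory Set Filter

theorem mul_rpow_le_of_monotoneOn_div_rpow {G : ℝ → ℝ} {i u : ℝ}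
    (hGi : MonotoneOn (fun t => G t / t ^ i) (Ioi 0)) (hu : 1 ≤ u) :
    G 1 * u ^ i ≤ G u := by
  have hui : 0 < u ^ i := Real.rpow_pos_of_pos (by linarith) i
  have h := hGi (mem_Ioi.mpr one_pos) (mem_Ioi.mpr (by linarith)) hu
  simp only [Real.one_rpow, div_one] at h
  rwa [le_div_iff₀ hui] at h

theorem div_le_inv_of_monotoneOn_div_rpow {G : ℝ → ℝ} {i u : ℝ} (hi : 1 ≤ i) (hG1 : 0 < G 1)
    (hGi : MonotoneOn (fun t => G t / t ^ i) (Ioi 0)) (hu : 1 ≤ u) :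
    u / G u ≤ (G 1)⁻¹ := by
  have hGu : G 1 * u ≤ G u := calc
    G 1 * u ≤ G 1 * u ^ i := by
      gcongr
      simpa using Real.rpow_le_rpow_of_exponent_le hu hi
    _ ≤ G u := mul_rpow_le_of_monotoneOn_div_rpow hGi hu
  rw [div_le_iff₀ ((mul_pos hG1 (by linarith)).trans_le hGu), inv_mul_eq_div, le_div_iff₀ hG1]
  linarith

theorem setIntegral_Ioc_le_add_mul_of_le {f : ℝ → ℝ} {a b s C : ℝ} (hab : a ≤ b) (has : a ≤ s)
    (hf0 : ∀ t ∈ Ioi a, 0 ≤ f t) (hfab : IntegrableOn f (Ioc a b))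
    (hfm : AEStronglyMeasurable f (volume.restrict (Ioi b))) (hfC : ∀ t ∈ Ioi b, f t ≤ C) :
    ∫ t in Ioc a s, f t ≤ (∫ t in Ioc a b, f t) + C * (s - a) := by
  have hC : 0 ≤ C :=
    (hf0 (b + 1) (show a < b + 1 by linarith)).trans (hfC (b + 1) (show b < b + 1 by linarith))
  rcases le_or_gt s b with hsb | hbs
  · have hmono : ∫ t in Ioc a s, f t ≤ ∫ t in Ioc a b, f t :=
      setIntegral_mono_set hfab
        (by filter_upwards [ae_restrict_mem measurableSet_Ioc] with t ht using hf0 t ht.1)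
        (Ioc_subset_Ioc_right hsb).eventuallyLE
    linarith [mul_nonneg hC (sub_nonneg.mpr has)]
  · have hbound : ∀ t ∈ Ioc b s, ‖f t‖ ≤ C := fun t ht => by
      rw [Real.norm_of_nonneg (hf0 t (hab.trans_lt ht.1))]
      exact hfC t ht.1
    have hfbs : IntegrableOn f (Ioc b s) :=
      IntegrableOn.of_bound measure_Ioc_lt_top (hfm.mono_measure (Measure.restrict_mono
        Ioc_subset_Ioi_self le_rfl)) C (ae_restrict_of_forall_mem measurableSet_Ioc hbound)
    have htail : ∫ t in Ioc b s, f t ≤ C * (s - b) := by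
      have := norm_setIntegral_le_of_norm_le_const (μ := volume) measure_Ioc_lt_top hbound
      rw [Real.volume_real_Ioc_of_le hbs.le] at this
      exact (Real.le_norm_self _).trans this
    rw [← Ioc_union_Ioc_eq_Ioc hab hbs.le,
      setIntegral_union (Ioc_disjoint_Ioc_of_le le_rfl) measurableSet_Ioc hfab hfbs]
    have : C * (s - b) ≤ C * (s - a) := by gcongr
    linarith

theorem integral_div_rpow_le_add_mul {G : ℝ → ℝ} {i β s : ℝ} (hi : 1 ≤ i) (hβ : 0 ≤ β)
    (hGmono : MonotoneOn G (Ioi 0)) (hGpos : ∀ t > 0, 0 < G t)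
    (hGi : MonotoneOn (fun t => G t / t ^ i) (Ioi 0))
    (hint : IntegrableOn (fun t => (t / G t) ^ β) (Ioc 0 1)) (hs : 0 ≤ s) :
    ∫ t in Ioc 0 s, (t / G t) ^ β ≤ (∫ t in Ioc 0 1, (t / G t) ^ β) + (G 1)⁻¹ ^ β * s := by
  have hf0 : ∀ t ∈ Ioi (0 : ℝ), 0 ≤ (t / G t) ^ β := fun t ht =>
    Real.rpow_nonneg (div_pos ht (hGpos t ht)).le β
  have hfm : AEStronglyMeasurable (fun t => (t / G t) ^ β) (volume.restrict (Ioi 1)) :=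
    ((aemeasurable_id.div (aemeasurable_restrict_of_monotoneOn measurableSet_Ioi
      (hGmono.mono fun t ht => zero_lt_one.trans ht))).pow_const β).aestronglyMeasurable
  have hfC : ∀ t ∈ Ioi (1 : ℝ), (t / G t) ^ β ≤ (G 1)⁻¹ ^ β := fun t ht =>
    Real.rpow_le_rpow (div_pos (zero_lt_one.trans ht) (hGpos t (zero_lt_one.trans ht))).le
      (div_le_inv_of_monotoneOn_div_rpow hi (hGpos 1 one_pos) hGi (le_of_lt ht)) hβ
  simpa using setIntegral_Ioc_le_add_mul_of_le zero_le_one hs hf0 hint hfm hfC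

theorem tendsto_atTop_of_le_add_mul {α : Type*} {l : Filter α} {φ u : α → ℝ} {A C : ℝ}
    (hC : 0 < C) (hu : Tendsto u l atTop) (h : ∀ᶠ x in l, u x ≤ A + C * φ x) :
    Tendsto φ l atTop := by
  refine tendsto_atTop_mono' _ ?_ ((tendsto_atTop_add_const_right _ (-A) hu).atTop_div_const hC)
  filter_upwards [h] with x hx
  rw [div_le_iff₀ hC]
  linarith

theorem tendsto_div_atTop_of_rpow_le {α : Type*} {l : Filter α} {φ g ψ : α → ℝ} {a K i : ℝ}
    (ha : 0 < a) (hK : 0 < K) (hi : 1 < i) (hφ : Tendsto φ l atTop)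
    (hg : ∀ᶠ x in l, a * φ x ^ i ≤ g x) (hψ : ∀ᶠ x in l, 0 < ψ x ∧ ψ x ≤ K * φ x) :
    Tendsto (fun x => g x / ψ x) l atTop := by
  refine tendsto_atTop_mono' _ ?_
    (((tendsto_rpow_atTop (sub_pos.mpr hi)).comp hφ).const_mul_atTop (div_pos ha hK))
  filter_upwards [hφ.eventually_gt_atTop 0, hg, hψ] with x hx hgx ⟨hψ0, hψK⟩
  calc a / K * (φ x) ^ (i - 1) = a * φ x ^ i / (K * φ x) := by
        rw [Real.rpow_sub_one hx.ne']
        field_simp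
    _ ≤ g x / ψ x := div_le_div₀ ((by positivity : 0 ≤ a * φ x ^ i).trans hgx) hgx hψ0 hψK

theorem sobolev_conjugate_superlinear_general (G H Hinv : ℝ → ℝ) (i σ : ℝ)
    (hi : 1 < i) (hσ : 1 < σ)
    (hGmono : StrictMonoOn G (Set.Ici (0 : ℝ)))
    (hGpos : ∀ t > (0 : ℝ), 0 < G t)
    (hGi : MonotoneOn (fun t => G t / t ^ i) (Set.Ioi (0 : ℝ)))
    (hconv0 : IntegrableOn (fun t => (t / G t) ^ (1 / (σ - 1))) (Set.Ioc (0 : ℝ) 1))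
    (hH : ∀ s ≥ (0 : ℝ),
      H s = (∫ t in Set.Ioc (0 : ℝ) s, (t / G t) ^ (1 / (σ - 1))) ^ ((σ - 1) / σ))
    (hHinv : ∀ t ≥ (0 : ℝ), 0 ≤ Hinv t ∧ H (Hinv t) = t) :
    Filter.Tendsto (fun t => G (Hinv t) / t ^ (σ / (σ - 1))) Filter.atTop Filter.atTop := by
  have hσ' : 0 < σ / (σ - 1) := div_pos (by linarith) (by linarith)
  set F : ℝ → ℝ := fun s => ∫ t in Ioc 0 s, (t / G t) ^ (1 / (σ - 1))
  set C : ℝ := (G 1)⁻¹ ^ (1 / (σ - 1))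
  have hC : 0 < C := Real.rpow_pos_of_pos (inv_pos.mpr (hGpos 1 one_pos)) _
  have hF0 : ∀ s, 0 ≤ F s := fun s => setIntegral_nonneg measurableSet_Ioc fun t ht =>
    Real.rpow_nonneg (div_pos ht.1 (hGpos t ht.1)).le _
  have hFle : ∀ s ≥ 0, F s ≤ F 1 + C * s := fun s =>
    integral_div_rpow_le_add_mul hi.le (one_div_pos.mpr (sub_pos.mpr hσ)).le
      (hGmono.monotoneOn.mono Ioi_subset_Ici_self) hGpos hGi hconv0
  have hFHinv : ∀ t ≥ 0, t ^ (σ / (σ - 1)) = F (Hinv t) := fun t ht => by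
    obtain ⟨hs, hHs⟩ := hHinv t ht
    conv_lhs => rw [← hHs, hH _ hs, ← inv_div σ]
    exact Real.rpow_inv_rpow (hF0 _) hσ'.ne'
  have hHinv_tendsto : Tendsto Hinv atTop atTop :=
    tendsto_atTop_of_le_add_mul hC (tendsto_rpow_atTop hσ')
      (by filter_upwards [eventually_ge_atTop 0] with t ht
          exact (hFHinv t ht).trans_le (hFle _ (hHinv t ht).1))
  refine tendsto_div_atTop_of_rpow_le (hGpos 1 one_pos) (add_pos_of_nonneg_of_pos (hF0 1) hC) hi
    hHinv_tendsto ?_ ?_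
  · filter_upwards [hHinv_tendsto.eventually_ge_atTop 1] with t hs
    exact mul_rpow_le_of_monotoneOn_div_rpow hGi hs
  · filter_upwards [hHinv_tendsto.eventually_ge_atTop 1, eventually_gt_atTop 0] with t hs ht
    refine ⟨by positivity, ?_⟩
    rw [hFHinv t ht.le]
    nlinarith [hFle _ (zero_le_one.trans hs), hF0 1]

/-- If `G` is convex, strictly increasing, `G 0 = 0`, `G(t)/t^i` is nondecreasing for some
`i > 1`, and `∫₁^∞ (t/G t)^{1/(σ-1)} dt = ∞`, then with
`H_σ(s) = (∫₀^s (t/G t)^{1/(σ-1)} dt)^{(σ-1)/σ}` and `G_σ = G ∘ H_σ⁻¹`,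
one has `lim_{t→∞} G_σ(t)/t^{σ'} = ∞` where `σ' = σ/(σ-1)`. -/
theorem sobolev_conjugate_superlinear (G H Hinv : ℝ → ℝ) (i σ : ℝ)
    (hi : 1 < i) (hσ : 1 < σ)
    (hGconv : ConvexOn ℝ (Set.Ici (0 : ℝ)) G)
    (hGmono : StrictMonoOn G (Set.Ici (0 : ℝ)))
    (hG0 : G 0 = 0) (hGpos : ∀ t > (0 : ℝ), 0 < G t)
    (hGi : MonotoneOn (fun t => G t / t ^ i) (Set.Ioi (0 : ℝ)))
    (hdiv : ¬ IntegrableOn (fun t => (t / G t) ^ (1 / (σ - 1))) (Set.Ioi (1 : ℝ)))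
    (hconv0 : IntegrableOn (fun t => (t / G t) ^ (1 / (σ - 1))) (Set.Ioc (0 : ℝ) 1))
    (hH : ∀ s ≥ (0 : ℝ),
      H s = (∫ t in Set.Ioc (0 : ℝ) s, (t / G t) ^ (1 / (σ - 1))) ^ ((σ - 1) / σ))
    (hHinv : ∀ t ≥ (0 : ℝ), 0 ≤ Hinv t ∧ H (Hinv t) = t) :
    Filter.Tendsto (fun t => G (Hinv t) / t ^ (σ / (σ - 1))) Filter.atTop Filter.atTop :=
  sobolev_conjugate_superlinear_general G H Hinv i σ hi hσ hGmono hGpos hGi hconv0 hH hHinv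
end
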